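/- arXiv:2508.14516 — 5 statements merged into one kernel-verified Lean document; each statement's English description precedes it below -/
import Mathlib

section
/- Let g, h : 2^E → ℝ≥0 be monotone with curvature at most c ∈ (0,1] and generic submodularity ratio at least γ ∈ (0,1]. Then there exists an ordering π = (e_1, …, e_n) of E such that for every k ∈ {1, …, n} and every S ⊆ E with |S| = k, (1/γ)·(1 + c·e^c/(e^c − 1))·f(S_k) ≥ f(S). -/
namespace IncDec

open Finset

variable {α : Type*} [Fintype α] [DecidableEq α]

/-- Marginal gain `F(x | S) = F(S ∪ {x}) - F(S)`. -/
def marg (F : Finset α → ℝ) (x : α) (S : Finset α) : ℝ := F (insert x S) - F S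

/-- Marginal gain of a set: `F(T | S) = F(T ∪ S) - F(S)`. -/
def margSet (F : Finset α → ℝ) (T S : Finset α) : ℝ := F (T ∪ S) - F S

/-- Monotone set function. -/
def Mono (F : Finset α → ℝ) : Prop := ∀ ⦃S T : Finset α⦄, S ⊆ T → F S ≤ F T

/-- Nonnegative set function. -/
def Nonneg (F : Finset α → ℝ) : Prop := ∀ S : Finset α, 0 ≤ F S

/-- The combined objective `f(S) = h(S) + g(E \ S)`. -/
def fObj (g h : Finset α → ℝ) (S : Finset α) : ℝ := h S + g Sᶜ

/-- `F` has generic submodularity ratio at least `γ`. -/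
def GenSubRatioGE (F : Finset α → ℝ) (γ : ℝ) : Prop :=
  ∀ A B : Finset α, ∀ e : α, marg F e A ≥ γ * marg F e (A ∪ B)

/-- `F` has curvature at most `c`. -/
def CurvatureLE (F : Finset α → ℝ) (c : ℝ) : Prop :=
  ∀ A B : Finset α, ∀ e : α, e ∉ B → marg F e (A ∪ B) ≥ (1 - c) * marg F e A

/-- Submodular set function. -/
def Submodular (F : Finset α → ℝ) : Prop :=
  ∀ ⦃S T : Finset α⦄, S ⊆ T → ∀ e : α, e ∉ T → marg F e T ≤ marg F e S

/-- Modular set function. -/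
def Modular (F : Finset α → ℝ) : Prop := ∀ S : Finset α, F S = ∑ e ∈ S, F {e}

/-- Gross substitute set function. -/
def GrossSubstitute (F : Finset α → ℝ) : Prop :=
  Submodular F ∧
    ∀ A B : Finset α, Disjoint A B → 2 ≤ B.card → ∀ b ∈ B,
      ∃ b' ∈ B.erase b,
        marg F b A + margSet F (B.erase b) A ≤ marg F b' A + margSet F (B.erase b') A

/-- The set of ratios appearing in the definition of the curvature. -/
def curvRatioSet (F : Finset α → ℝ) : Set ℝ :=
  {r | ∃ A B : Finset α, ∃ e : α, e ∉ B ∧ 0 < marg F e A ∧ r = marg F e (A ∪ B) / marg F e A}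

/-- `F` has curvature exactly `c` (with `min ∅ := 1`, i.e. `c = 0` if the ratio set is empty). -/
def CurvatureEq (F : Finset α → ℝ) (c : ℝ) : Prop :=
  (¬ (curvRatioSet F).Nonempty ∧ c = 0) ∨ IsLeast (curvRatioSet F) (1 - c)

/-- The set of ratios appearing in the definition of the generic submodularity ratio. -/
def gsRatioSet (F : Finset α → ℝ) : Set ℝ :=
  {r | ∃ A B : Finset α, ∃ e : α, 0 < marg F e (A ∪ B) ∧ r = marg F e A / marg F e (A ∪ B)}

/-- `F` has generic submodularity ratio exactly `γ` (with `min ∅ := 1`). -/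
def GenSubRatioEq (F : Finset α → ℝ) (γ : ℝ) : Prop :=
  (¬ (gsRatioSet F).Nonempty ∧ γ = 1) ∨ IsLeast (gsRatioSet F) γ

/-- The singleton-based ratio set `{F(e | E \ {e}) / F({e}) : e ∈ E, F({e}) > 0}`. -/
def curvSingletonSet (F : Finset α → ℝ) : Set ℝ :=
  {r | ∃ e : α, 0 < F {e} ∧ r = marg F e ({e}ᶜ) / F {e}}

/-- A run of the double-greedy algorithm for `g` and `h`: distinct elements `elt 0, …,
`elt (n-1)` enumerating `E` (`elt i` is the element `e*_{i+1}` of the paper), together with the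
sets `H i`, `G i` (for `0 ≤ i ≤ n`), each new element maximizing the larger marginal gain and
being added to the side realizing it. -/
structure DGRun (α : Type*) [Fintype α] [DecidableEq α] (g h : Finset α → ℝ) where
  elt : ℕ → α
  H : ℕ → Finset α
  G : ℕ → Finset α
  H0 : H 0 = ∅
  G0 : G 0 = ∅
  mem : ∀ i < Fintype.card α, elt i ∉ H i ∪ G i
  distinct : ∀ i < Fintype.card α, ∀ j < Fintype.card α, elt i = elt j → i = j
  enum : ∀ x : α, ∃ i < Fintype.card α, elt i = x
  greedy : ∀ i < Fintype.card α, ∀ x : α, x ∉ H i ∪ G i →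
      max (marg g x (G i)) (marg h x (H i)) ≤ max (marg g (elt i) (G i)) (marg h (elt i) (H i))
  step : ∀ i < Fintype.card α,
      (H (i + 1) = insert (elt i) (H i) ∧ G (i + 1) = G i ∧
        marg g (elt i) (G i) ≤ marg h (elt i) (H i)) ∨
      (G (i + 1) = insert (elt i) (G i) ∧ H (i + 1) = H i ∧
        marg h (elt i) (H i) ≤ marg g (elt i) (G i))

/-- `phi R i` is the increment `φ_{i+1}` of the double-greedy run `R`. -/
def phi {g h : Finset α → ℝ} (R : DGRun α g h) (i : ℕ) : ℝ :=
  max (marg g (R.elt i) (R.G i)) (marg h (R.elt i) (R.H i))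

/-!
Run the double greedy algorithm: step `i` selects an unselected element `e` of largest gain
`φ_i = max (g(e | G_i), h(e | H_i))` and adds it to `H` or to `G`, whichever realizes the maximum.
Listing `H` in order of selection followed by `G` in reverse, every prefix is some `H_τ` or the
complement of some `G_σ`, and exchanging `g` and `h` (`f(S)` is the objective of `(h, g)` at `Sᶜ`)
reduces the second case to the first.

For `A = H_τ` and `|S| = |A| = k`, the submodularity ratio and the greedy choice give at every
step `i < τ` the bound `γ h(S) ≤ γ c h(H_i) + γ (1 - c) h(A ∩ S) + X + k φ_i`, where curvature
accounts for the part of `H_i` outside `S` and `X` collects the gains of the `G`-steps selecting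
elements of `S`.
So the deficit `γ h(S) - γ c h(H_i) - …` shrinks by the factor `1 - γ c / k` at each of the `k`
`H`-steps; `(1 - γ c / k)^k ≤ e^{-γ c}` and the convexity of `exp` turn this into the constant
`c e^c / (e^c - 1)`. The remaining terms are paid for by the gains of the steps, which add up to
`h(A) - h(∅)` on the `H`-side and to at most `g(Aᶜ) - g(∅)` on the `G`-side.
-/

omit [Fintype α] in
theorem marg_nonneg {F : Finset α → ℝ} (hF : Mono F) (x : α) (S : Finset α) :
    0 ≤ marg F x S :=
  sub_nonneg.2 (hF (subset_insert x S))

omit [Fintype α] in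
theorem marg_const_mul (F : Finset α → ℝ) (γ : ℝ) (x : α) (S : Finset α) :
    marg (fun T => γ * F T) x S = γ * marg F x S :=
  (mul_sub γ _ _).symm

omit [Fintype α] in
theorem GenSubRatioGE.mul_marg_le {F : Finset α → ℝ} {γ : ℝ} (hF : GenSubRatioGE F γ)
    {A B : Finset α} (hAB : A ⊆ B) (e : α) : γ * marg F e B ≤ marg F e A := by
  simpa [union_eq_right.2 hAB] using hF A B e

omit [Fintype α] in
theorem CurvatureLE.mul_marg_le {F : Finset α → ℝ} {c : ℝ} (hF : CurvatureLE F c)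
    {A B : Finset α} (hAB : A ⊆ B) {e : α} (he : e ∉ B) :
    (1 - c) * marg F e A ≤ marg F e B := by
  simpa [union_eq_right.2 hAB] using hF A B e he

omit [Fintype α] in
theorem apply_union_le_add_sum {F : Finset α → ℝ} {b : α → ℝ} {X D : Finset α}
    (hb : ∀ a ∈ D, ∀ Y, X ⊆ Y → marg F a Y ≤ b a) : F (X ∪ D) ≤ F X + ∑ a ∈ D, b a := by
  induction D using Finset.induction_on generalizing X with
  | empty => simp
  | insert a D ha ih =>
    have hrest := ih (X := insert a X) fun a' ha' Y hY =>
      hb a' (mem_insert_of_mem ha') Y ((subset_insert a X).trans hY)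
    have hfirst := hb a (mem_insert_self a D) X subset_rfl
    rw [union_insert, ← insert_union, sum_insert ha]
    unfold marg at hfirst
    linarith

omit [Fintype α] in
theorem CurvatureLE.mul_sub_le_sub {F : Finset α → ℝ} {c : ℝ} (hF : CurvatureLE F c)
    {X X' D : Finset α} (hXX' : X ⊆ X') (hD : Disjoint D X') :
    (1 - c) * (F (X ∪ D) - F X) ≤ F (X' ∪ D) - F X' := by
  induction D using Finset.induction_on generalizing X X' with
  | empty => simp
  | insert a D ha ih =>
    rw [disjoint_insert_left] at hD
    have hrest := ih (insert_subset_insert a hXX') (disjoint_insert_right.2 ⟨ha, hD.2⟩)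
    have hfirst := hF.mul_marg_le hXX' hD.1
    rw [union_insert, ← insert_union, union_insert, ← insert_union]
    unfold marg at hfirst
    linarith

omit [Fintype α] in
theorem CurvatureLE.mul_sub_inter_le {F : Finset α → ℝ} {c : ℝ} (hF : CurvatureLE F c)
    (T S : Finset α) : (1 - c) * (F T - F (T ∩ S)) ≤ F (S ∪ T) - F S := by
  have := hF.mul_sub_le_sub (inter_subset_right : T ∩ S ⊆ S) (sdiff_disjoint : Disjoint (T \ S) S)
  rwa [union_comm, sdiff_union_inter, union_sdiff_self_eq_union] at this

open Real in
theorem one_le_mul_exp_div {c : ℝ} (hc : 0 < c) : 1 ≤ c * exp c / (exp c - 1) := by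
  have hpos : 0 < exp c - 1 := by linarith [add_one_lt_exp hc.ne']
  rw [le_div_iff₀ hpos]
  have h1 : 1 - c ≤ exp (-c) := one_sub_le_exp_neg c
  have h2 : exp (-c) * exp c = 1 := by rw [← exp_add, neg_add_cancel, exp_zero]
  nlinarith [exp_pos c]

open Real in
theorem mul_le_mul_exp_div_mul_one_sub_pow {c γ : ℝ} {k : ℕ} (hc0 : 0 < c) (hc1 : c ≤ 1)
    (hγ0 : 0 < γ) (hγ1 : γ ≤ 1) (hk : 1 ≤ k) :
    γ * c ≤ c * exp c / (exp c - 1) * (1 - (1 - γ * c / k) ^ k) := by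
  have hpos : 0 < exp c - 1 := by linarith [add_one_lt_exp hc0.ne']
  have hk' : (1 : ℝ) ≤ k := by exact_mod_cast hk
  have hpow : (1 - γ * c / k) ^ k ≤ exp (-(γ * c)) := one_sub_div_pow_le_exp_neg (by nlinarith)
  have hconv : exp ((1 - γ) * c) ≤ (1 - γ) * exp c + γ := by
    simpa using convexOn_exp.2 (Set.mem_univ c) (Set.mem_univ 0) (by linarith) hγ0.le
      (by ring)
  have hsplit : exp (-(γ * c)) * exp c = exp ((1 - γ) * c) := by rw [← exp_add]; ring_nf
  rw [div_mul_eq_mul_div, le_div_iff₀ hpos]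
  nlinarith [exp_pos c, mul_le_mul_of_nonneg_left hpow (exp_pos c).le]

theorem le_pow_mul_of_forall_lt {w : ℕ → ℝ} {m : ℕ → ℕ} {q : ℝ} {τ : ℕ} (hq : 0 ≤ q)
    (hm : m 0 = 0)
    (hstep : ∀ i < τ, (m (i + 1) = m i + 1 ∧ w (i + 1) ≤ q * w i) ∨
      (m (i + 1) = m i ∧ w (i + 1) ≤ w i)) :
    w τ ≤ q ^ m τ * w 0 := by
  induction τ with
  | zero => simp [hm]
  | succ τ ih =>
    have ih := ih fun i hi => hstep i (by omega)
    rcases hstep τ (by omega) with ⟨hmτ, hwτ⟩ | ⟨hmτ, hwτ⟩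
    · rw [hmτ, pow_succ', mul_assoc]
      exact hwτ.trans (mul_le_mul_of_nonneg_left ih hq)
    · rw [hmτ]
      exact hwτ.trans ih

theorem max_sub_mul_le {z φ a k : ℝ} (hk : 0 < k) (ha : 0 ≤ a) (hak : a ≤ k) (hφ : 0 ≤ φ)
    (hz : z ≤ k * φ) : max (z - a * φ) 0 ≤ (1 - a / k) * max z 0 := by
  have hq : 0 ≤ 1 - a / k := by rw [sub_nonneg, div_le_one hk]; exact hak
  rcases le_total z 0 with hz0 | hz0
  · rw [max_eq_right hz0, mul_zero, max_le_iff]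
    exact ⟨by nlinarith, le_rfl⟩
  · rw [max_eq_left hz0]
    refine max_le ?_ (mul_nonneg hq hz0)
    have : z / k ≤ φ := by rw [div_le_iff₀ hk]; linarith
    have : a * (z / k) ≤ a * φ := mul_le_mul_of_nonneg_left this ha
    calc z - a * φ ≤ z - a * (z / k) := by linarith
      _ = (1 - a / k) * z := by field_simp

theorem exists_eq_of_le_add_one {f : ℕ → ℕ} (h0 : f 0 = 0) (hf : ∀ i, f (i + 1) ≤ f i + 1)
    {n m : ℕ} (hm : m ≤ f n) : ∃ i ≤ n, f i = m := by
  induction n with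
  | zero => exact ⟨0, le_rfl, by omega⟩
  | succ n ih =>
    rcases le_or_gt m (f n) with hmn | hmn
    · obtain ⟨i, hi, hfi⟩ := ih hmn
      exact ⟨i, by omega, hfi⟩
    · exact ⟨n + 1, le_rfl, by have := hf n; omega⟩

theorem toFinset_take_eq_compl {l : List α} (hl : l.Nodup) (hmem : ∀ x, x ∈ l)
    (k : ℕ) : (l.take k).toFinset = (l.drop k).toFinsetᶜ := by
  ext x
  simp only [List.mem_toFinset, mem_compl]
  constructor
  · exact fun hx hx' => List.disjoint_take_drop hl le_rfl hx hx'
  · intro hx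
    have := hmem x
    rw [← List.take_append_drop k l, List.mem_append] at this
    exact this.resolve_right hx

namespace DGRun

variable {g h : Finset α → ℝ} (R : DGRun α g h)

def swap : DGRun α h g where
  elt := R.elt
  H := R.G
  G := R.H
  H0 := R.G0
  G0 := R.H0
  mem i hi := by rw [union_comm]; exact R.mem i hi
  distinct := R.distinct
  enum := R.enum
  greedy i hi x hx := by
    rw [max_comm (marg h x _), max_comm (marg h (R.elt i) _)]
    exact R.greedy i hi x (by rwa [union_comm] at hx)
  step i hi := (R.step i hi).symm

theorem phi_swap : phi R.swap = phi R := funext fun _ => max_comm _ _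

theorem elt_notMem_H {i : ℕ} (hi : i < Fintype.card α) : R.elt i ∉ R.H i :=
  fun hH => R.mem i hi (mem_union_left _ hH)

theorem step_phi {i : ℕ} (hi : i < Fintype.card α) :
    (R.H (i + 1) = insert (R.elt i) (R.H i) ∧ R.G (i + 1) = R.G i ∧
        phi R i = marg h (R.elt i) (R.H i)) ∨
      (R.H (i + 1) = R.H i ∧ R.G (i + 1) = insert (R.elt i) (R.G i) ∧
        phi R i = marg g (R.elt i) (R.G i)) := by
  rcases R.step i hi with ⟨hH, hG, hle⟩ | ⟨hG, hH, hle⟩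
  · exact .inl ⟨hH, hG, max_eq_right hle⟩
  · exact .inr ⟨hH, hG, max_eq_left hle⟩

theorem phi_nonneg (hh : Mono h) (i : ℕ) : 0 ≤ phi R i :=
  (marg_nonneg hh _ _).trans (le_max_right _ _)

theorem greedy_le_phi {i : ℕ} (hi : i < Fintype.card α) {x : α} (hx : x ∉ R.H i ∪ R.G i) :
    marg h x (R.H i) ≤ phi R i :=
  (le_max_right _ _).trans (R.greedy i hi x hx)

theorem H_mono {i j : ℕ} (hij : i ≤ j) (hj : j ≤ Fintype.card α) : R.H i ⊆ R.H j := by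
  induction j, hij using Nat.le_induction with
  | base => exact subset_rfl
  | succ j hij ih =>
    refine (ih (by omega)).trans ?_
    rcases R.step_phi (by omega : j < Fintype.card α) with ⟨hH, -, -⟩ | ⟨hH, -, -⟩
    · exact hH ▸ subset_insert _ _
    · exact hH.ge

theorem disjoint_H_G {i : ℕ} (hi : i ≤ Fintype.card α) : Disjoint (R.H i) (R.G i) := by
  induction i with
  | zero => simp [R.H0]
  | succ i ih =>
    have hmem := R.mem i (by omega)
    rw [mem_union, not_or] at hmem
    rcases R.step_phi (by omega : i < Fintype.card α) with ⟨hH, hG, -⟩ | ⟨hH, hG, -⟩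
    · rw [hH, hG, disjoint_insert_left]
      exact ⟨hmem.2, ih (by omega)⟩
    · rw [hH, hG, disjoint_insert_right]
      exact ⟨hmem.1, ih (by omega)⟩

theorem H_union_G : R.H (Fintype.card α) ∪ R.G (Fintype.card α) = univ := by
  refine eq_univ_of_forall fun x => ?_
  obtain ⟨i, hi, rfl⟩ := R.enum x
  refine union_subset_union (R.H_mono hi le_rfl) (R.swap.H_mono hi le_rfl) ?_
  show R.elt i ∈ R.H (i + 1) ∪ R.G (i + 1)
  rcases R.step_phi hi with ⟨hH, -, -⟩ | ⟨-, hG, -⟩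
  · exact mem_union_left _ (hH ▸ mem_insert_self _ _)
  · exact mem_union_right _ (hG ▸ mem_insert_self _ _)

theorem G_subset_compl_H {τ : ℕ} (hτ : τ ≤ Fintype.card α) :
    R.G (Fintype.card α) ⊆ (R.H τ)ᶜ :=
  subset_compl_iff_disjoint_right.2
    ((R.disjoint_H_G le_rfl).symm.mono_right (R.H_mono hτ le_rfl))

noncomputable def stepOf (x : α) : ℕ := Classical.choose (R.enum x)

theorem stepOf_lt (x : α) : R.stepOf x < Fintype.card α := (Classical.choose_spec (R.enum x)).1

theorem elt_stepOf (x : α) : R.elt (R.stepOf x) = x := (Classical.choose_spec (R.enum x)).2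

theorem stepOf_elt {j : ℕ} (hj : j < Fintype.card α) : R.stepOf (R.elt j) = j :=
  R.distinct _ (R.stepOf_lt _) j hj (R.elt_stepOf _)

theorem stepOf_lt_of_mem {x : α} {i : ℕ} (hx : x ∈ R.H i ∪ R.G i) : R.stepOf x < i := by
  by_contra! hle
  apply R.mem _ (R.stepOf_lt x)
  rw [R.elt_stepOf]
  exact union_subset_union (R.H_mono hle (R.stepOf_lt x).le)
    (R.swap.H_mono hle (R.stepOf_lt x).le) hx

noncomputable def gain (x : α) : ℝ := phi R (R.stepOf x)

theorem gain_swap : R.swap.gain = R.gain := funext fun x => congrFun R.phi_swap (R.stepOf x)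

theorem gain_nonneg (hh : Mono h) (x : α) : 0 ≤ R.gain x := R.phi_nonneg hh _

theorem marg_H_stepOf_le_gain (x : α) : marg h x (R.H (R.stepOf x)) ≤ R.gain x := by
  have : marg h (R.elt (R.stepOf x)) (R.H (R.stepOf x)) ≤ phi R (R.stepOf x) :=
    le_max_right _ _
  rwa [R.elt_stepOf] at this

theorem marg_G_stepOf_le_gain (x : α) : marg g x (R.G (R.stepOf x)) ≤ R.gain x :=
  R.gain_swap ▸ R.swap.marg_H_stepOf_le_gain x

theorem apply_H_eq {i : ℕ} (hi : i ≤ Fintype.card α) :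
    h (R.H i) = h ∅ + ∑ a ∈ R.H i, R.gain a := by
  induction i with
  | zero => simp [R.H0]
  | succ i ih =>
    have hi' : i < Fintype.card α := by omega
    rcases R.step_phi hi' with ⟨hH, -, hφ⟩ | ⟨hH, -, -⟩
    · rw [hH, sum_insert (R.elt_notMem_H hi'), gain, R.stepOf_elt hi', hφ, add_left_comm,
        ← ih hi'.le]
      unfold marg
      ring
    · rw [hH]
      exact ih hi'.le

theorem apply_G_eq {i : ℕ} (hi : i ≤ Fintype.card α) :
    g (R.G i) = g ∅ + ∑ a ∈ R.G i, R.gain a := by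
  rw [← R.gain_swap]
  exact R.swap.apply_H_eq hi

variable {c γ : ℝ}

theorem mul_sub_le_sum_gain_inter (hhC : CurvatureLE h c) {i : ℕ} (hi : i ≤ Fintype.card α)
    (S : Finset α) : (1 - c) * (h (R.H i ∩ S) - h ∅) ≤ ∑ a ∈ R.H i ∩ S, R.gain a := by
  induction i with
  | zero => simp [R.H0]
  | succ i ih =>
    have hi' : i < Fintype.card α := by omega
    have ih := ih hi'.le
    rcases R.step_phi hi' with ⟨hH, -, hφ⟩ | ⟨hH, -, -⟩
    · by_cases hS : R.elt i ∈ S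
      · have hcurv := hhC.mul_marg_le (inter_subset_left : R.H i ∩ S ⊆ R.H i)
          (R.elt_notMem_H hi')
        rw [hH, insert_inter_of_mem hS,
          sum_insert fun hmem => R.elt_notMem_H hi' (mem_inter.1 hmem).1, gain,
          R.stepOf_elt hi', hφ]
        unfold marg at hcurv ⊢
        linarith
      · rwa [hH, insert_inter_of_notMem hS]
    · rwa [hH]

theorem mul_apply_union_H_le (hhm : Mono h) (hhγ : GenSubRatioGE h γ) {i : ℕ}
    (hi : i < Fintype.card α) (S : Finset α) :
    γ * h (S ∪ R.H i) ≤ γ * h (R.H i) + ∑ a ∈ S ∩ R.G i, R.gain a + S.card * phi R i := by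
  -- an element of `S` already in `G i` is paid for by the gain of its own earlier step, an
  -- unselected one by `φ_i`, thanks to the greedy choice
  let b a := (if a ∈ R.G i then R.gain a else 0) + phi R i
  have htele : γ * h (R.H i ∪ (S \ R.H i)) ≤ γ * h (R.H i) + ∑ a ∈ S \ R.H i, b a := by
    refine apply_union_le_add_sum (F := fun T => γ * h T) fun a ha Y hY => ?_
    rw [marg_const_mul]
    by_cases haG : a ∈ R.G i
    · have hsub : R.H (R.stepOf a) ⊆ Y :=
        (R.H_mono (R.stepOf_lt_of_mem (mem_union_right _ haG)).le hi.le).trans hY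
      calc γ * marg h a Y ≤ marg h a (R.H (R.stepOf a)) := hhγ.mul_marg_le hsub a
        _ ≤ R.gain a := R.marg_H_stepOf_le_gain a
        _ ≤ b a := by simp [b, haG, R.phi_nonneg hhm]
    · have hfree : a ∉ R.H i ∪ R.G i := by simp [(mem_sdiff.1 ha).2, haG]
      calc γ * marg h a Y ≤ marg h a (R.H i) := hhγ.mul_marg_le hY a
        _ ≤ phi R i := R.greedy_le_phi hi hfree
        _ ≤ b a := by simp [b, haG]
  have hsum : ∑ a ∈ S \ R.H i, b a ≤ ∑ a ∈ S ∩ R.G i, R.gain a + S.card * phi R i := by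
    simp only [b, sum_add_distrib, sum_ite_mem, sum_const, nsmul_eq_mul]
    refine add_le_add (sum_le_sum_of_subset_of_nonneg (inter_subset_inter_right sdiff_subset)
      fun a _ _ => R.gain_nonneg hhm a) (mul_le_mul_of_nonneg_right ?_ (R.phi_nonneg hhm i))
    exact_mod_cast card_le_card sdiff_subset
  rw [union_sdiff_self_eq_union, union_comm] at htele
  linarith

theorem mul_apply_le_of_lt (hhm : Mono h) (hhC : CurvatureLE h c) (hhγ : GenSubRatioGE h γ)
    (hc1 : c ≤ 1) (hγ0 : 0 ≤ γ) {i τ : ℕ} (hiτ : i < τ) (hτ : τ ≤ Fintype.card α)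
    (S : Finset α) :
    γ * h S ≤ γ * c * h (R.H i) + γ * (1 - c) * h (R.H τ ∩ S) +
      ∑ a ∈ S ∩ R.G τ, R.gain a + S.card * phi R i := by
  have hpair := mul_le_mul_of_nonneg_left (hhC.mul_sub_inter_le (R.H i) S) hγ0
  have hunion := R.mul_apply_union_H_le hhm hhγ (hiτ.trans_le hτ) S
  have hW : γ * (1 - c) * h (R.H i ∩ S) ≤ γ * (1 - c) * h (R.H τ ∩ S) :=
    mul_le_mul_of_nonneg_left (hhm (inter_subset_inter_right (R.H_mono hiτ.le hτ)))
      (mul_nonneg hγ0 (by linarith))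
  have hX : ∑ a ∈ S ∩ R.G i, R.gain a ≤ ∑ a ∈ S ∩ R.G τ, R.gain a :=
    sum_le_sum_of_subset_of_nonneg (inter_subset_inter_left (R.swap.H_mono hiτ.le hτ))
      fun a _ _ => R.gain_nonneg hhm a
  linarith

open Real in
theorem sub_le_mul_exp_div_mul (hhm : Mono h) (hc0 : 0 < c) (hc1 : c ≤ 1) (hγ0 : 0 < γ)
    (hγ1 : γ ≤ 1) {τ : ℕ} (hτ : τ ≤ Fintype.card α) (hk : 1 ≤ (R.H τ).card) {Z : ℝ}
    (hZ : ∀ i < τ, Z - γ * c * h (R.H i) ≤ (R.H τ).card * phi R i) :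
    Z - γ * c * h ∅ ≤ c * exp c / (exp c - 1) * (h (R.H τ) - h ∅) := by
  set k := (R.H τ).card
  have hk' : (1 : ℝ) ≤ k := by exact_mod_cast hk
  have hγc : 0 < γ * c := mul_pos hγ0 hc0
  have hγck : γ * c ≤ k := by nlinarith
  set q := 1 - γ * c / k
  have hq0 : 0 ≤ q := by rw [sub_nonneg, div_le_one (by linarith)]; exact hγck
  have hq1 : q < 1 := by have := div_pos hγc (by linarith : (0 : ℝ) < k); linarith
  have hdecay : max (Z - γ * c * h (R.H τ)) 0 ≤ q ^ k * max (Z - γ * c * h (R.H 0)) 0 := by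
    refine le_pow_mul_of_forall_lt (w := fun i => max (Z - γ * c * h (R.H i)) 0)
      (m := fun i => (R.H i).card) hq0 (by simp [R.H0]) fun i hi => ?_
    have hi' : i < Fintype.card α := by omega
    rcases R.step_phi hi' with ⟨hH, -, hφ⟩ | ⟨hH, -, -⟩
    · refine .inl ⟨by rw [hH, card_insert_of_notMem (R.elt_notMem_H hi')], ?_⟩
      have hstep : Z - γ * c * h (R.H (i + 1)) = Z - γ * c * h (R.H i) - γ * c * phi R i := by
        rw [hφ, hH]; unfold marg; ring
      simp only [hstep]
      exact max_sub_mul_le (by linarith) hγc.le hγck (R.phi_nonneg hhm i) (hZ i hi)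
    · exact .inr ⟨by rw [hH], by simp only [hH, le_refl]⟩
  have hC : 0 ≤ c * exp c / (exp c - 1) := by linarith [one_le_mul_exp_div hc0]
  have hD : 0 ≤ h (R.H τ) - h ∅ := sub_nonneg.2 (hhm (empty_subset _))
  rw [R.H0] at hdecay
  rcases le_or_gt (Z - γ * c * h ∅) 0 with hZ0 | hZ0
  · exact hZ0.trans (mul_nonneg hC hD)
  have hqk : 0 < 1 - q ^ k := by
    linarith [pow_le_of_le_one hq0 hq1.le (by omega : k ≠ 0)]
  have hkey := mul_le_mul_of_nonneg_right
    (mul_le_mul_exp_div_mul_one_sub_pow hc0 hc1 hγ0 hγ1 hk) hD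
  rw [max_eq_left hZ0.le] at hdecay
  refine le_of_mul_le_mul_right ?_ hqk
  nlinarith [le_max_left (Z - γ * c * h (R.H τ)) 0]

theorem mul_apply_compl_le (hgm : Mono g) (hgγ : GenSubRatioGE g γ) (hγ0 : 0 ≤ γ) {τ : ℕ}
    (hτ : τ ≤ Fintype.card α) (S : Finset α) :
    γ * g Sᶜ ≤ γ * g (R.H τ)ᶜ + ∑ a ∈ R.H τ \ S, R.gain a := by
  have hcover : γ * g Sᶜ ≤ γ * g ((R.H τ)ᶜ ∪ (R.H τ \ S)) := by
    refine mul_le_mul_of_nonneg_left (hgm fun x hx => ?_) hγ0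
    by_cases hxH : x ∈ R.H τ <;> simp_all
  have htele := apply_union_le_add_sum (F := fun T => γ * g T) (X := (R.H τ)ᶜ)
    (D := R.H τ \ S) (b := R.gain) fun a _ Y hY => by
      rw [marg_const_mul]
      have hsub : R.G (R.stepOf a) ⊆ Y :=
        ((R.swap.H_mono (R.stepOf_lt a).le le_rfl).trans (R.G_subset_compl_H hτ)).trans hY
      exact (hgγ.mul_marg_le hsub a).trans (R.marg_G_stepOf_le_gain a)
  exact hcover.trans htele

open Real in
theorem mul_fObj_le (hgm : Mono g) (hhm : Mono h) (hg0 : Nonneg g) (hh0 : Nonneg h)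
    (hc0 : 0 < c) (hc1 : c ≤ 1) (hγ0 : 0 < γ) (hγ1 : γ ≤ 1) (hhC : CurvatureLE h c)
    (hgγ : GenSubRatioGE g γ) (hhγ : GenSubRatioGE h γ) {τ : ℕ} (hτ : τ ≤ Fintype.card α)
    (S : Finset α) (hS : S.card = (R.H τ).card) :
    γ * fObj g h S ≤ (1 + c * exp c / (exp c - 1)) * fObj g h (R.H τ) := by
  set A := R.H τ
  set C := c * exp c / (exp c - 1)
  have hC : 1 ≤ C := one_le_mul_exp_div hc0
  unfold fObj
  rcases Nat.eq_zero_or_pos A.card with hk | hk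
  · rw [card_eq_zero.1 (hS.trans hk), card_eq_zero.1 hk]
    nlinarith [hh0 ∅, hg0 ∅ᶜ]
  set X := ∑ a ∈ S ∩ R.G τ, R.gain a
  set P := ∑ a ∈ A ∩ S, R.gain a
  set Y := ∑ a ∈ A \ S, R.gain a
  have hdeficit := R.sub_le_mul_exp_div_mul hhm hc0 hc1 hγ0 hγ1 hτ hk
    (Z := γ * h S - γ * (1 - c) * h (A ∩ S) - X) fun i hi => by
      have := R.mul_apply_le_of_lt hhm hhC hhγ hc1 hγ0.le hi hτ S
      rw [hS] at this
      linarith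
  have hW := mul_le_mul_of_nonneg_left (R.mul_sub_le_sum_gain_inter hhC hτ S) hγ0.le
  have hg := R.mul_apply_compl_le hgm hgγ hγ0.le hτ S
  have hX : X ≤ g Aᶜ - g ∅ := by
    have hGn := R.apply_G_eq le_rfl
    have := hgm (R.G_subset_compl_H hτ)
    have : X ≤ ∑ a ∈ R.G (Fintype.card α), R.gain a :=
      sum_le_sum_of_subset_of_nonneg (inter_subset_right.trans (R.swap.H_mono hτ le_rfl))
        fun a _ _ => R.gain_nonneg hhm a
    linarith
  have hPY : P + Y = h A - h ∅ := by rw [sum_inter_add_sum_sdiff, R.apply_H_eq hτ]; ring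
  have hP : 0 ≤ P := sum_nonneg fun a _ => R.gain_nonneg hhm a
  nlinarith [hh0 ∅, hg0 ∅, hg0 Aᶜ, mul_nonneg (sub_nonneg.2 hγ1) hP,
    mul_nonneg (sub_nonneg.2 hγ1) (hh0 ∅), mul_nonneg (by linarith : 0 ≤ C - γ) (hg0 Aᶜ)]

def hList : ℕ → List α
  | 0 => []
  | i + 1 => hList i ++ if R.elt i ∈ R.H (i + 1) then [R.elt i] else []

theorem toFinset_hList {i : ℕ} (hi : i ≤ Fintype.card α) : (R.hList i).toFinset = R.H i := by
  induction i with
  | zero => simp [hList, R.H0]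
  | succ i ih =>
    have hi' : i < Fintype.card α := by omega
    rcases R.step_phi hi' with ⟨hH, -, -⟩ | ⟨hH, -, -⟩
    · simp [hList, ih hi'.le, hH]
    · simp [hList, ih hi'.le, hH, R.elt_notMem_H hi']

theorem nodup_hList {i : ℕ} (hi : i ≤ Fintype.card α) : (R.hList i).Nodup := by
  induction i with
  | zero => simp [hList]
  | succ i ih =>
    have hi' : i < Fintype.card α := by omega
    rw [hList]
    refine (ih hi'.le).append (by split <;> simp) fun a ha hb => ?_
    split at hb
    · rw [List.mem_singleton] at hb
      rw [← List.mem_toFinset, R.toFinset_hList hi'.le, hb] at ha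
      exact R.elt_notMem_H hi' ha
    · simp at hb

theorem hList_prefix {i j : ℕ} (hij : i ≤ j) : R.hList i <+: R.hList j := by
  induction j, hij using Nat.le_induction with
  | base => exact List.prefix_rfl
  | succ j _ ih => exact ih.trans ⟨_, rfl⟩

theorem exists_take_hList_eq {m : ℕ} (hm : m ≤ (R.hList (Fintype.card α)).length) :
    ∃ τ ≤ Fintype.card α, (R.hList (Fintype.card α)).take m = R.hList τ := by
  obtain ⟨τ, hτ, rfl⟩ := exists_eq_of_le_add_one (f := fun i => (R.hList i).length) rfl
    (fun i => by simp only [hList, List.length_append]; split <;> simp) hm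
  exact ⟨τ, hτ, (List.prefix_iff_eq_take.1 (R.hList_prefix hτ)).symm⟩

theorem exists_nodup_toFinset_take_eq :
    ∃ π : List α, π.Nodup ∧ (∀ x, x ∈ π) ∧ ∀ k ≤ Fintype.card α, ∃ τ ≤ Fintype.card α,
      (π.take k).toFinset = R.H τ ∨ (π.take k).toFinset = (R.G τ)ᶜ := by
  set n := Fintype.card α
  set L := R.hList n
  set L' := R.swap.hList n
  have hdisj : L.Disjoint L'.reverse := by
    rw [← List.disjoint_toFinset_iff_disjoint, List.toFinset_reverse, R.toFinset_hList le_rfl,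
      R.swap.toFinset_hList le_rfl]
    exact R.disjoint_H_G le_rfl
  have hnodup : (L ++ L'.reverse).Nodup :=
    (R.nodup_hList le_rfl).append (List.nodup_reverse.2 (R.swap.nodup_hList le_rfl)) hdisj
  have hmem : ∀ x, x ∈ L ++ L'.reverse := fun x => by
    rw [← List.mem_toFinset, List.toFinset_append, List.toFinset_reverse,
      R.toFinset_hList le_rfl, R.swap.toFinset_hList le_rfl]
    exact R.H_union_G ▸ mem_univ x
  have hlen : L.length + L'.length = n := by
    rw [← List.length_reverse (as := L'), ← List.length_append,
      ← List.toFinset_card_of_nodup hnodup,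
      eq_univ_of_forall fun x => List.mem_toFinset.2 (hmem x), card_univ]
  refine ⟨L ++ L'.reverse, hnodup, hmem, fun k hk => ?_⟩
  rcases le_total k L.length with hkL | hkL
  · obtain ⟨τ, hτ, htake⟩ := R.exists_take_hList_eq hkL
    refine ⟨τ, hτ, .inl ?_⟩
    rw [List.take_append_of_le_length hkL, htake, R.toFinset_hList hτ]
  · obtain ⟨σ, hσ, htake⟩ := R.swap.exists_take_hList_eq (m := n - k)
      (show n - k ≤ L'.length by omega)
    refine ⟨σ, hσ, .inr ?_⟩
    rw [toFinset_take_eq_compl hnodup hmem, List.drop_append, List.drop_eq_nil_of_le hkL,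
      List.nil_append, List.drop_reverse, List.toFinset_reverse,
      show L'.length - (k - L.length) = n - k by omega, htake, R.swap.toFinset_hList hσ]
    rfl

end DGRun

section Construction

variable [Nonempty α] (g h : Finset α → ℝ)

noncomputable def pick (p : Finset α × Finset α) : α :=
  if hp : (p.1 ∪ p.2)ᶜ.Nonempty then
    ((p.1 ∪ p.2)ᶜ.exists_max_image (fun x => max (marg g x p.2) (marg h x p.1)) hp).choose
  else Classical.arbitrary α

theorem pick_spec {p : Finset α × Finset α} (hp : (p.1 ∪ p.2)ᶜ.Nonempty) :
    pick g h p ∉ p.1 ∪ p.2 ∧ ∀ x ∉ p.1 ∪ p.2, max (marg g x p.2) (marg h x p.1) ≤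
      max (marg g (pick g h p) p.2) (marg h (pick g h p) p.1) := by
  rw [pick, dif_pos hp]
  obtain ⟨hmem, hmax⟩ :=
    ((p.1 ∪ p.2)ᶜ.exists_max_image (fun x => max (marg g x p.2) (marg h x p.1)) hp).choose_spec
  exact ⟨mem_compl.1 hmem, fun x hx => hmax x (mem_compl.2 hx)⟩

noncomputable def greedyState : ℕ → Finset α × Finset α
  | 0 => (∅, ∅)
  | i + 1 =>
    let p := greedyState i
    if marg g (pick g h p) p.2 ≤ marg h (pick g h p) p.1 then (insert (pick g h p) p.1, p.2)
    else (p.1, insert (pick g h p) p.2)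

theorem union_greedyState (i : ℕ) :
    (greedyState g h i).1 ∪ (greedyState g h i).2 =
      (range i).image fun j => pick g h (greedyState g h j) := by
  induction i with
  | zero => simp [greedyState]
  | succ i ih =>
    rw [range_add_one, image_insert, ← ih, greedyState]
    split_ifs <;> simp [insert_union, union_insert]

theorem card_union_greedyState {i : ℕ} (hi : i ≤ Fintype.card α) :
    ((greedyState g h i).1 ∪ (greedyState g h i).2).card = i := by
  induction i with
  | zero => simp [greedyState]
  | succ i ih =>
    have hfree : ((greedyState g h i).1 ∪ (greedyState g h i).2)ᶜ.Nonempty := by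
      rw [← card_pos, card_compl, ih (by omega)]
      omega
    rw [union_greedyState, range_add_one, image_insert, ← union_greedyState,
      card_insert_of_notMem (pick_spec g h hfree).1, ih (by omega)]

theorem nonempty_dgRun : Nonempty (DGRun α g h) := by
  set n := Fintype.card α
  have hfree {i : ℕ} (hi : i < n) :
      ((greedyState g h i).1 ∪ (greedyState g h i).2)ᶜ.Nonempty := by
    rw [← card_pos, card_compl, card_union_greedyState g h hi.le]
    omega
  have hall : (range n).image (fun j => pick g h (greedyState g h j)) = univ := by
    rw [← union_greedyState]
    exact eq_univ_of_card _ (card_union_greedyState g h le_rfl)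
  have hinj : Set.InjOn (fun j => pick g h (greedyState g h j)) (range n) := by
    rw [← card_image_iff, hall, card_univ, card_range]
  refine ⟨{
    elt := fun i => pick g h (greedyState g h i)
    H := fun i => (greedyState g h i).1
    G := fun i => (greedyState g h i).2
    H0 := rfl
    G0 := rfl
    mem := fun i hi => (pick_spec g h (hfree hi)).1
    distinct := fun i hi j hj hij => hinj (mem_range.2 hi) (mem_range.2 hj) hij
    enum := fun x => by
      obtain ⟨j, hj, hx⟩ := mem_image.1 (hall.symm ▸ mem_univ x)
      exact ⟨j, mem_range.1 hj, hx⟩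
    greedy := fun i hi => (pick_spec g h (hfree hi)).2
    step := fun i hi => ?_ }⟩
  dsimp only [greedyState]
  split_ifs with hle
  · exact .inl ⟨rfl, rfl, hle⟩
  · exact .inr ⟨rfl, rfl, (not_le.1 hle).le⟩

end Construction

theorem fObj_compl (g h : Finset α → ℝ) (S : Finset α) : fObj g h Sᶜ = fObj h g S := by
  rw [fObj, fObj, compl_compl, add_comm]

theorem stmt0 (g h : Finset α → ℝ) (c γ : ℝ)
    (hgm : Mono g) (hhm : Mono h) (hg0 : Nonneg g) (hh0 : Nonneg h)
    (hc0 : 0 < c) (hc1 : c ≤ 1) (hγ0 : 0 < γ) (hγ1 : γ ≤ 1)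
    (hgC : CurvatureLE g c) (hhC : CurvatureLE h c)
    (hgγ : GenSubRatioGE g γ) (hhγ : GenSubRatioGE h γ) :
    ∃ π : List α, π.Nodup ∧ (∀ x : α, x ∈ π) ∧
      ∀ k : ℕ, 1 ≤ k → k ≤ Fintype.card α → ∀ S : Finset α, S.card = k →
        (1 / γ) * (1 + c * Real.exp c / (Real.exp c - 1)) *
            fObj g h (π.take k).toFinset ≥ fObj g h S := by
  rcases isEmpty_or_nonempty α with hα | hα
  · exact ⟨[], List.nodup_nil, isEmptyElim, fun k hk hkn => by simp at hkn; omega⟩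
  obtain ⟨R⟩ := nonempty_dgRun g h
  obtain ⟨π, hπ, hmem, hprefix⟩ := R.exists_nodup_toFinset_take_eq
  refine ⟨π, hπ, hmem, fun k _ hk S hS => ?_⟩
  have hcard : (π.take k).toFinset.card = k := by
    rw [List.toFinset_card_of_nodup (hπ.sublist (List.take_sublist k π)), List.length_take,
      ← List.toFinset_card_of_nodup hπ,
      eq_univ_of_forall fun x => List.mem_toFinset.2 (hmem x), card_univ, min_eq_left hk]
  rw [ge_iff_le, mul_assoc, one_div, le_inv_mul_iff₀ hγ0]
  obtain ⟨τ, hτ, hT | hT⟩ := hprefix k hk <;> rw [hT] at hcard ⊢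
  · exact R.mul_fObj_le hgm hhm hg0 hh0 hc0 hc1 hγ0 hγ1 hhC hgγ hhγ hτ S (hS.trans hcard.symm)
  · have hSc : Sᶜ.card = (R.swap.H τ).card := by
      rw [card_compl, hS, ← hcard, card_compl, Nat.sub_sub_self (card_le_univ _)]
      rfl
    have := R.swap.mul_fObj_le hhm hgm hh0 hg0 hc0 hc1 hγ0 hγ1 hgC hhγ hgγ hτ Sᶜ hSc
    rw [fObj_compl] at this ⊢
    exact this

end IncDec
end

section
/- Let g, h : 2^E → ℝ≥0 be monotone and let ρ ≥ 1. Suppose π^h = (a_1, …, a_n) is an ordering of E such that ρ·h({a_1, …, a_k}) ≥ h(S) for every k ∈ {1, …, n} and every S ⊆ E with |S| = k, and π^g = (b_1, …, b_n) is an ordering of E such that ρ·g({b_1, …, b_k}) ≥ g(S) for every k ∈ {1, …, n} and every S ⊆ E with |S| = k. Let A_k = {a_1, …, a_k} and B_k = {b_{n−k+1}, …, b_n} (the last k elements of π^g). Then for every k ∈ {1, …, n} and every S ⊆ E with |S| = k, f(A_k) + f(B_k) ≥ (1/ρ)·f(S). -/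
namespace IncDec

open Finset

variable {α : Type*} [Fintype α] [DecidableEq α]

theorem _root_.List.toFinset_take_compl_eq_toFinset_drop {β : Type*} [Fintype β] [DecidableEq β]
    {l : List β} (hl : l.Nodup) (hlE : ∀ x, x ∈ l) (m : ℕ) :
    (l.take m).toFinsetᶜ = (l.drop m).toFinset := by
  have hsplit := List.take_append_drop m l
  rw [← hsplit, List.nodup_append] at hl
  ext x
  simp only [mem_compl, List.mem_toFinset]
  refine ⟨fun hx => ?_, fun hx hx' => hl.2.2 x hx' x hx rfl⟩
  have hxl := hlE x
  rw [← hsplit, List.mem_append] at hxl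
  exact hxl.resolve_left hx

theorem fObj_le_mul_add {g h : Finset α → ℝ} (hg0 : Nonneg g) (hh0 : Nonneg h) {ρ : ℝ}
    (hρ : 0 ≤ ρ) {S A B : Finset α} (hhS : h S ≤ ρ * h A) (hgS : g Sᶜ ≤ ρ * g Bᶜ) :
    fObj g h S ≤ ρ * (fObj g h A + fObj g h B) := by
  have hgA := mul_nonneg hρ (hg0 Aᶜ)
  have hhB := mul_nonneg hρ (hh0 B)
  unfold fObj
  linarith

theorem stmt3_general (g h : Finset α → ℝ) (ρ : ℝ) (hρ : 1 ≤ ρ)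
    (hg0 : Nonneg g) (hh0 : Nonneg h)
    (a b : List α)
    (hb : b.Nodup) (hbE : ∀ x : α, x ∈ b)
    (hA : ∀ k : ℕ, 1 ≤ k → k ≤ Fintype.card α → ∀ S : Finset α, S.card = k →
      ρ * h (a.take k).toFinset ≥ h S)
    (hB : ∀ k : ℕ, 1 ≤ k → k ≤ Fintype.card α → ∀ S : Finset α, S.card = k →
      ρ * g (b.take k).toFinset ≥ g S) :
    ∀ k : ℕ, 1 ≤ k → k ≤ Fintype.card α → ∀ S : Finset α, S.card = k →
      fObj g h (a.take k).toFinset + fObj g h (b.drop (Fintype.card α - k)).toFinset ≥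
        (1 / ρ) * fObj g h S := by
  intro k hk1 hkn S hS
  set m := Fintype.card α - k
  have hρ0 : 0 < ρ := zero_lt_one.trans_le hρ
  have hScard : Sᶜ.card = m := by rw [card_compl, hS]
  -- For `m = 0` the hypothesis on `π^g` says nothing, but then `Sᶜ` and `b.take m` are both empty.
  have hgS : g Sᶜ ≤ ρ * g (b.take m).toFinset := by
    rcases Nat.eq_zero_or_pos m with hm0 | hm0
    · rw [card_eq_zero.mp (hScard.trans hm0), hm0, List.take_zero, List.toFinset_nil]
      exact le_mul_of_one_le_left (hg0 ∅) hρ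
    · exact hB m hm0 (Nat.sub_le _ _) Sᶜ hScard
  rw [← compl_compl (b.take m).toFinset, List.toFinset_take_compl_eq_toFinset_drop hb hbE] at hgS
  rw [ge_iff_le, one_div, inv_mul_le_iff₀ hρ0]
  exact fObj_le_mul_add hg0 hh0 hρ0.le (hA k hk1 hkn S hS) hgS

theorem stmt3 (g h : Finset α → ℝ) (ρ : ℝ) (hρ : 1 ≤ ρ)
    (hgm : Mono g) (hhm : Mono h) (hg0 : Nonneg g) (hh0 : Nonneg h)
    (a b : List α) (ha : a.Nodup) (haE : ∀ x : α, x ∈ a)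
    (hb : b.Nodup) (hbE : ∀ x : α, x ∈ b)
    (hA : ∀ k : ℕ, 1 ≤ k → k ≤ Fintype.card α → ∀ S : Finset α, S.card = k →
      ρ * h (a.take k).toFinset ≥ h S)
    (hB : ∀ k : ℕ, 1 ≤ k → k ≤ Fintype.card α → ∀ S : Finset α, S.card = k →
      ρ * g (b.take k).toFinset ≥ g S) :
    ∀ k : ℕ, 1 ≤ k → k ≤ Fintype.card α → ∀ S : Finset α, S.card = k →
      fObj g h (a.take k).toFinset + fObj g h (b.drop (Fintype.card α - k)).toFinset ≥
        (1 / ρ) * fObj g h S :=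
  stmt3_general g h ρ hρ hg0 hh0 a b hb hbE hA hB

end IncDec
end

section
/- Let g, h : 2^E → ℝ≥0 be monotone with curvature at most c ∈ (0,1] and generic submodularity ratio at least γ ∈ (0,1]. Then there exist two orderings π^1 and π^2 of E such that for every k ∈ {1, …, n} and every S ⊆ E with |S| = k, f(P_k(π^1)) + f(P_k(π^2)) ≥ ((e^{cγ} − 1)/(c·e^{cγ}))·f(S), where P_k(π) denotes the set of the first k elements of π. -/
namespace IncDec

open Finset

theorem succ_mul_pow_mul_sub_le_pow_sub_pow {x y : ℝ} (hx : 0 ≤ x) (hxy : x ≤ y) (n : ℕ) :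
    (n + 1) * x ^ n * (y - x) ≤ y ^ (n + 1) - x ^ (n + 1) := by
  induction n with
  | zero => simp
  | succ n ih =>
    have hyx : 0 ≤ y - x := sub_nonneg.2 hxy
    calc ((n + 1 : ℕ) + 1 : ℝ) * x ^ (n + 1) * (y - x)
        = x * ((n + 1) * x ^ n * (y - x)) + x ^ (n + 1) * (y - x) := by push_cast; ring
      _ ≤ y * (y ^ (n + 1) - x ^ (n + 1)) + x ^ (n + 1) * (y - x) := by
        gcongr ?_ + _
        exact mul_le_mul hxy ih (by positivity) (hx.trans hxy)
      _ = y ^ (n + 1 + 1) - x ^ (n + 1 + 1) := by ring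

theorem one_sub_div_nonneg {a : ℝ} (ha : a ≤ 1) (n : ℕ) : 0 ≤ 1 - a / n := by
  rcases Nat.eq_zero_or_pos n with rfl | hn
  · simp
  · have : a / n ≤ 1 := (div_le_one (by positivity)).2 (ha.trans (by exact_mod_cast hn))
    linarith

theorem one_sub_le_one_sub_div_pow {a : ℝ} (ha0 : 0 ≤ a) (ha1 : a ≤ 1) {d n : ℕ}
    (hdn : d ≤ n) : 1 - a ≤ (1 - a / n) ^ d := by
  have hbern := one_add_mul_sub_le_pow (a := 1 - a / n) (by linarith [one_sub_div_nonneg ha1 n]) d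
  have hdan : d * (a / n) ≤ a := by
    rcases Nat.eq_zero_or_pos n with rfl | hn
    · simp [ha0]
    · rw [mul_div_left_comm]
      exact mul_le_of_le_one_right ha0 ((div_le_one (by positivity)).2 (by exact_mod_cast hdn))
  linarith

/-- The step of the downward induction at a greedy pick inside `S`, where `rᵢ = n + 1`
drops to `rᵢ₊₁ = n`. -/
theorem one_sub_div_pow_mul_add_le {c γ : ℝ} (hc0 : 0 ≤ c) (hc1 : c ≤ 1) (hγ0 : 0 ≤ γ)
    (hγ1 : γ ≤ 1) {d n : ℕ} (hdn : d ≤ n) :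
    (1 - c * γ / n) ^ d * (1 - γ / (n + 1)) + (1 - c) * γ / (n + 1)
      ≤ (1 - c * γ / (n + 1)) ^ (d + 1) := by
  have ha0 : 0 ≤ c * γ := mul_nonneg hc0 hγ0
  have ha1 : c * γ ≤ 1 := mul_le_one₀ hc1 hγ0 hγ1
  rcases d with _ | d
  · apply le_of_eq; ring
  have hn : (0 : ℝ) < n := by exact_mod_cast (by omega : 0 < n)
  set x := 1 - c * γ / n with hx
  set y := 1 - c * γ / (n + 1) with hy
  set t := γ / (n + 1) with ht
  have hx0 : 0 ≤ x := one_sub_div_nonneg ha1 n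
  have hxy : x ≤ y := by
    rw [hx, hy]
    gcongr
    linarith
  have htx : t * (1 - x) = γ * (y - x) := by
    rw [hx, hy, ht]; field_simp; ring
  have hyx_pow : (1 - c) * γ ≤ y * x ^ d := by
    have hxd : 1 - c * γ ≤ x * x ^ d := pow_succ' x d ▸ one_sub_le_one_sub_div_pow ha0 ha1 hdn
    nlinarith [mul_le_mul_of_nonneg_right hxy (pow_nonneg hx0 d)]
  have hbern : 1 - x ^ (d + 1) ≤ (d + 1) * (1 - x) := by
    have := one_add_mul_sub_le_pow (a := x) (by linarith) (d + 1)
    push_cast at this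
    linarith
  have hct : 0 ≤ (1 - c) * t := mul_nonneg (by linarith) (by positivity)
  have hgap : (1 - c) * t * (1 - x ^ (d + 1)) ≤ y * (y ^ (d + 1) - x ^ (d + 1)) :=
    calc (1 - c) * t * (1 - x ^ (d + 1))
        ≤ (1 - c) * t * ((d + 1) * (1 - x)) := by gcongr
      _ = (d + 1) * (y - x) * ((1 - c) * γ) := by linear_combination (1 - c) * (d + 1) * htx
      _ ≤ (d + 1) * (y - x) * (y * x ^ d) := by gcongr
      _ = y * ((d + 1) * x ^ d * (y - x)) := by ring
      _ ≤ y * (y ^ (d + 1) - x ^ (d + 1)) :=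
        mul_le_mul_of_nonneg_left (succ_mul_pow_mul_sub_le_pow_sub_pow hx0 hxy d) (hx0.trans hxy)
  calc _ = y ^ (d + 1 + 1)
        - (y * (y ^ (d + 1) - x ^ (d + 1)) - (1 - c) * t * (1 - x ^ (d + 1))) := by
        rw [ht, hy]; ring
    _ ≤ y ^ (d + 1 + 1) := by linarith

/-- `U i`, `R i` and `r i` stand for `F(Gᵢ)`, `Rᵢ` and `rᵢ` of a greedy run. -/
theorem greedy_recurrence_bound {c γ : ℝ} (hc0 : 0 ≤ c) (hc1 : c ≤ 1) (hγ0 : 0 ≤ γ)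
    (hγ1 : γ ≤ 1) {k : ℕ} {U R : ℕ → ℝ} {r : ℕ → ℕ} (hU : Monotone U)
    (hr : ∀ i ≤ k, k - i ≤ r i) (hgain : ∀ i < k, γ * R i ≤ r i * (U (i + 1) - U i))
    (hstep : ∀ i < k, (r (i + 1) + 1 = r i ∧ R i - (U (i + 1) - U i) ≤ R (i + 1)) ∨
      (r (i + 1) = r i ∧ R i - c * (U (i + 1) - U i) ≤ R (i + 1)))
    {i : ℕ} (hi : i ≤ k) :
    (1 - (1 - c * γ / r i) ^ (k - i)) * R i ≤ c * (U k - U i) := by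
  have ha1 : c * γ ≤ 1 := mul_le_one₀ hc1 hγ0 hγ1
  obtain ⟨d, hd⟩ : ∃ d, k - i = d := ⟨_, rfl⟩
  induction d generalizing i with
  | zero =>
    rw [hd, pow_zero, sub_self, zero_mul]
    exact mul_nonneg hc0 (sub_nonneg.2 (hU hi))
  | succ d ih =>
    have hik : i < k := by omega
    have hdr : d + 1 ≤ r i := hd ▸ hr i hi
    have hδ : 0 ≤ U (i + 1) - U i := sub_nonneg.2 (hU i.le_succ)
    have ih := ih (i := i + 1) (by omega) (by omega)
    rw [show k - (i + 1) = d by omega] at ih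
    have hsplit : U k - U i = (U (i + 1) - U i) + (U k - U (i + 1)) := by ring
    set δ := U (i + 1) - U i
    set y := 1 - c * γ / r i with hy
    have hy0 : 0 ≤ y := one_sub_div_nonneg ha1 _
    have hy1 : y ≤ 1 := sub_le_self _ (by positivity)
    rw [hd]
    rcases hstep i hik with ⟨hri, hRi⟩ | ⟨hri, hRi⟩
    · set x := 1 - c * γ / r (i + 1) with hx
      have hx0 : 0 ≤ x := one_sub_div_nonneg ha1 _
      have hx1 : x ≤ 1 := sub_le_self _ (by positivity)
      have hcast : (r i : ℝ) = r (i + 1) + 1 := by rw [← hri]; push_cast; ring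
      rcases lt_or_ge (R i) 0 with hR | hR
      · have : 0 ≤ 1 - y ^ (d + 1) := sub_nonneg.2 (pow_le_one₀ hy0 hy1)
        nlinarith [mul_nonneg hc0 (sub_nonneg.2 (hU hi))]
      have hkey := one_sub_div_pow_mul_add_le hc0 hc1 hγ0 hγ1 (d := d) (n := r (i + 1))
        (by omega)
      rw [← hcast, ← hx, ← hy] at hkey
      have hxd : 1 - c ≤ x ^ d := by
        have := one_sub_le_one_sub_div_pow (mul_nonneg hc0 hγ0) ha1 (by omega : d ≤ r (i + 1))
        nlinarith
      have hgain' : γ / r i * R i ≤ δ := by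
        rw [div_mul_eq_mul_div, div_le_iff₀ (by rw [hcast]; positivity), mul_comm δ]
        exact hgain i hik
      calc (1 - y ^ (d + 1)) * R i
          ≤ (1 - (x ^ d * (1 - γ / r i) + (1 - c) * γ / r i)) * R i := by gcongr
        _ = (c - 1 + x ^ d) * (γ / r i * R i) + (1 - x ^ d) * R i := by ring
        _ ≤ (c - 1 + x ^ d) * δ + (1 - x ^ d) * R i := by gcongr; linarith
        _ = c * δ + (1 - x ^ d) * (R i - δ) := by ring
        _ ≤ c * δ + (1 - x ^ d) * R (i + 1) := by
          gcongr
          exact sub_nonneg.2 (pow_le_one₀ hx0 hx1)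
        _ ≤ c * (U k - U i) := by rw [hsplit]; linarith
    · rw [hri, ← hy] at ih
      have hri0 : (0 : ℝ) < r i := by exact_mod_cast (by omega : 0 < r i)
      have hgain' : c * γ / r i * R i ≤ c * δ := by
        rw [mul_div_assoc, mul_assoc]
        gcongr
        rw [div_mul_eq_mul_div, div_le_iff₀ hri0, mul_comm δ]
        exact hgain i hik
      calc (1 - y ^ (d + 1)) * R i
          = (1 - y ^ d) * R i + y ^ d * (c * γ / r i * R i) := by rw [hy]; ring
        _ ≤ (1 - y ^ d) * R i + y ^ d * (c * δ) := by gcongr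
        _ = (1 - y ^ d) * (R i - c * δ) + c * δ := by ring
        _ ≤ (1 - y ^ d) * R (i + 1) + c * δ := by
          gcongr
          exact sub_nonneg.2 (pow_le_one₀ hy0 hy1)
        _ ≤ c * (U k - U i) := by rw [hsplit]; linarith

theorem exp_sub_one_div_mul_exp_le_one {c γ : ℝ} (hc0 : 0 < c) (hγ1 : γ ≤ 1) :
    (Real.exp (c * γ) - 1) / (c * Real.exp (c * γ)) ≤ 1 := by
  have hpos := Real.exp_pos (c * γ)
  have hexp := mul_le_mul_of_nonneg_right (Real.one_sub_le_exp_neg (c * γ)) hpos.le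
  rw [← Real.exp_add, neg_add_cancel, Real.exp_zero] at hexp
  rw [div_le_one (by positivity)]
  nlinarith [mul_nonneg (mul_nonneg hc0.le hpos.le) (sub_nonneg.2 hγ1)]

theorem _root_.List.Nodup.getElem_notMem_take {β : Type*} {l : List β} (hl : l.Nodup) {i : ℕ}
    (hi : i < l.length) : l[i] ∉ l.take i := by
  have h := hl.sublist (List.take_sublist (i + 1) l)
  rw [← List.take_append_getElem hi, List.nodup_append] at h
  exact fun hmem => h.2.2 _ hmem _ (List.mem_singleton_self _) rfl

theorem _root_.List.toFinset_take_add_one {β : Type*} [DecidableEq β] {l : List β} {i : ℕ}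
    (hi : i < l.length) : (l.take (i + 1)).toFinset = insert l[i] (l.take i).toFinset := by
  rw [← List.take_append_getElem hi, List.toFinset_append]
  simp

variable {α : Type*} [DecidableEq α] {F : Finset α → ℝ}

theorem GenSubRatioGE.mul_sub_le_sum_marg {γ : ℝ} (hF : GenSubRatioGE F γ) (A T : Finset α) :
    γ * (F (T ∪ A) - F A) ≤ ∑ e ∈ T \ A, marg F e A := by
  induction T using Finset.induction_on with
  | empty => simp
  | @insert a T ha ih =>
    by_cases haA : a ∈ A
    · rwa [insert_union, insert_eq_self.2 (mem_union_right T haA), insert_sdiff_of_mem T haA]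
    · rw [insert_sdiff_of_notMem T haA, sum_insert (fun h => ha (mem_sdiff.1 h).1)]
      have hstep : γ * marg F a (T ∪ A) ≤ marg F a A := union_comm T A ▸ hF A T a
      calc γ * (F (insert a T ∪ A) - F A)
          = γ * (F (T ∪ A) - F A) + γ * marg F a (T ∪ A) := by rw [insert_union, marg]; ring
        _ ≤ _ := by linarith

theorem CurvatureLE.margSet_insert {c : ℝ} (hF : CurvatureLE F c) (S A : Finset α) {e : α}
    (he : e ∉ A) :
    (#(S \ insert e A) + 1 = #(S \ A) ∧ margSet F S A - marg F e A ≤ margSet F S (insert e A)) ∨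
      (#(S \ insert e A) = #(S \ A) ∧
        margSet F S A - c * marg F e A ≤ margSet F S (insert e A)) := by
  rw [sdiff_insert]
  by_cases heS : e ∈ S
  · refine Or.inl ⟨card_erase_add_one (mem_sdiff.2 ⟨heS, he⟩), le_of_eq ?_⟩
    rw [margSet, margSet, union_insert, insert_eq_self.2 (mem_union_left A heS), marg]
    ring
  · refine Or.inr ⟨by rw [erase_eq_of_notMem (fun h => heS (mem_sdiff.1 h).1)], ?_⟩
    have hcurv : (1 - c) * marg F e A ≤ marg F e (S ∪ A) := union_comm A S ▸ hF A S e heS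
    rw [margSet, margSet, union_insert]
    simp only [marg] at hcurv ⊢
    linarith

def IsGreedyOrder (F : Finset α → ℝ) (l : List α) : Prop :=
  ∀ i (hi : i < l.length), ∀ x ∉ l.take i,
    marg F x (l.take i).toFinset ≤ marg F l[i] (l.take i).toFinset

namespace IsGreedyOrder

variable {l : List α}

theorem mul_margSet_le {γ : ℝ} (hgr : IsGreedyOrder F l) (hF : GenSubRatioGE F γ)
    (S : Finset α) {i : ℕ} (hi : i < l.length) :
    γ * margSet F S (l.take i).toFinset ≤
      #(S \ (l.take i).toFinset) * (F (l.take (i + 1)).toFinset - F (l.take i).toFinset) := by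
  calc γ * margSet F S (l.take i).toFinset
      ≤ ∑ e ∈ S \ (l.take i).toFinset, marg F e (l.take i).toFinset :=
        hF.mul_sub_le_sum_marg _ S
    _ ≤ #(S \ (l.take i).toFinset) • marg F l[i] (l.take i).toFinset :=
        sum_le_card_nsmul _ _ _ fun e he =>
          hgr i hi e fun h => (mem_sdiff.1 he).2 (List.mem_toFinset.2 h)
    _ = _ := by rw [nsmul_eq_mul, List.toFinset_take_add_one hi, marg]

theorem one_sub_pow_mul_le (hgr : IsGreedyOrder F l) (hnd : l.Nodup) (hm : Mono F) {c γ : ℝ}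
    (hc0 : 0 ≤ c) (hc1 : c ≤ 1) (hγ0 : 0 ≤ γ) (hγ1 : γ ≤ 1) (hcurv : CurvatureLE F c)
    (hratio : GenSubRatioGE F γ) {S : Finset α} (hS : #S ≤ l.length) :
    (1 - (1 - c * γ / #S) ^ #S) * (F S - F ∅) ≤ c * (F (l.take #S).toFinset - F ∅) := by
  have hU : Monotone fun i => F (l.take i).toFinset := fun i j hij =>
    hm fun x hx => List.mem_toFinset.2 (List.take_subset_take_left l hij (List.mem_toFinset.1 hx))
  have hr : ∀ i ≤ #S, #S - i ≤ #(S \ (l.take i).toFinset) := fun i _ => by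
    have := le_card_sdiff (l.take i).toFinset S
    have := (List.toFinset_card_le (l.take i)).trans (List.length_take_le i l)
    omega
  have hstep := fun i (hi : i < #S) => by
    have hil : i < l.length := hi.trans_le hS
    have h := hcurv.margSet_insert S _ (mt List.mem_toFinset.1 (hnd.getElem_notMem_take hil))
    rwa [← List.toFinset_take_add_one hil, marg, ← List.toFinset_take_add_one hil] at h
  simpa [margSet] using greedy_recurrence_bound hc0 hc1 hγ0 hγ1 hU hr
    (fun i hi => hgr.mul_margSet_le hratio S (hi.trans_le hS)) hstep (Nat.zero_le _)

theorem exp_const_mul_le (hgr : IsGreedyOrder F l) (hnd : l.Nodup) (hm : Mono F) {c γ : ℝ}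
    (hc0 : 0 < c) (hc1 : c ≤ 1) (hγ0 : 0 ≤ γ) (hγ1 : γ ≤ 1) (hcurv : CurvatureLE F c)
    (hratio : GenSubRatioGE F γ) {S : Finset α} (hS : #S ≤ l.length) :
    (Real.exp (c * γ) - 1) / (c * Real.exp (c * γ)) * (F S - F ∅) ≤
      F (l.take #S).toFinset - F ∅ := by
  rcases Nat.eq_zero_or_pos #S with hS0 | hSpos
  · simp [card_eq_zero.1 hS0]
  have hpoly := hgr.one_sub_pow_mul_le hnd hm hc0.le hc1 hγ0 hγ1 hcurv hratio hS
  have hexp : (1 - c * γ / #S) ^ #S ≤ Real.exp (-(c * γ)) :=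
    Real.one_sub_div_pow_le_exp_neg ((mul_le_one₀ hc1 hγ0 hγ1).trans (by exact_mod_cast hSpos))
  have hconst : (Real.exp (c * γ) - 1) / (c * Real.exp (c * γ))
      = (1 - Real.exp (-(c * γ))) / c := by
    rw [Real.exp_neg]
    field_simp
  have hFS : 0 ≤ F S - F ∅ := sub_nonneg.2 (hm (empty_subset S))
  rw [hconst, div_mul_eq_mul_div, div_le_iff₀ hc0]
  calc (1 - Real.exp (-(c * γ))) * (F S - F ∅)
      ≤ (1 - (1 - c * γ / #S) ^ #S) * (F S - F ∅) := by gcongr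
    _ ≤ _ := by linarith

end IsGreedyOrder

end IncDec

namespace IncDec

open Finset

variable {α : Type*} [Fintype α] [DecidableEq α]

theorem exists_isGreedyOrder (F : Finset α → ℝ) :
    ∃ l : List α, l.Nodup ∧ l.length = Fintype.card α ∧ (∀ x, x ∈ l) ∧ IsGreedyOrder F l := by
  suffices h : ∀ m ≤ Fintype.card α, ∃ l : List α, l.Nodup ∧ l.length = m ∧ IsGreedyOrder F l by
    obtain ⟨l, hnd, hlen, hgr⟩ := h _ le_rfl
    have huniv : l.toFinset = univ :=
      eq_univ_of_card _ (by rw [List.toFinset_card_of_nodup hnd, hlen])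
    exact ⟨l, hnd, hlen, fun x => List.mem_toFinset.1 (huniv ▸ mem_univ x), hgr⟩
  intro m
  induction m with
  | zero => exact fun _ => ⟨[], List.nodup_nil, rfl, fun i hi => absurd hi (Nat.not_lt_zero i)⟩
  | succ m ih =>
    intro hm
    obtain ⟨l, hnd, hlen, hgr⟩ := ih (by omega)
    have hne : (l.toFinset)ᶜ.Nonempty := by
      rw [← card_pos, card_compl, List.toFinset_card_of_nodup hnd]
      omega
    obtain ⟨e, he, hmax⟩ := exists_max_image _ (fun x => marg F x l.toFinset) hne
    have he' : e ∉ l := by simpa using he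
    refine ⟨l ++ [e], ?_, by simp [hlen], ?_⟩
    · refine List.nodup_append.2 ⟨hnd, List.nodup_singleton e, ?_⟩
      rintro a ha b hb rfl
      exact he' (List.mem_singleton.1 hb ▸ ha)
    intro i hi x hx
    rcases Nat.lt_or_ge i l.length with hil | hil
    · rw [List.take_append_of_le_length hil.le] at hx ⊢
      rw [List.getElem_append_left hil]
      exact hgr i hil x hx
    · have hil : i = l.length := by
        simp only [List.length_append, List.length_singleton] at hi
        omega
      subst hil
      rw [List.take_append_length] at hx ⊢
      rw [List.getElem_concat_length rfl]
      exact hmax x (by simpa using hx)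

theorem toFinset_reverse_take {l : List α} (hnd : l.Nodup) (hl : ∀ x, x ∈ l) (k : ℕ) :
    (l.reverse.take k).toFinset = (l.take (l.length - k)).toFinsetᶜ := by
  ext x
  rw [List.take_reverse, List.toFinset_reverse, mem_compl, List.mem_toFinset, List.mem_toFinset]
  have hx := List.take_append_drop (l.length - k) l ▸ hl x
  have hdisj := List.disjoint_take_drop hnd (le_refl (l.length - k))
  rw [List.mem_append] at hx
  exact ⟨fun hd ht => hdisj ht hd, hx.resolve_left⟩

theorem stmt4 (g h : Finset α → ℝ) (c γ : ℝ)
    (hgm : Mono g) (hhm : Mono h) (hg0 : Nonneg g) (hh0 : Nonneg h)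
    (hc0 : 0 < c) (hc1 : c ≤ 1) (hγ0 : 0 < γ) (hγ1 : γ ≤ 1)
    (hgC : CurvatureLE g c) (hhC : CurvatureLE h c)
    (hgγ : GenSubRatioGE g γ) (hhγ : GenSubRatioGE h γ) :
    ∃ π₁ π₂ : List α, π₁.Nodup ∧ (∀ x : α, x ∈ π₁) ∧ π₂.Nodup ∧ (∀ x : α, x ∈ π₂) ∧
      ∀ k : ℕ, 1 ≤ k → k ≤ Fintype.card α → ∀ S : Finset α, S.card = k →
        fObj g h (π₁.take k).toFinset + fObj g h (π₂.take k).toFinset ≥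
          ((Real.exp (c * γ) - 1) / (c * Real.exp (c * γ))) * fObj g h S := by
  obtain ⟨l₁, hnd₁, hlen₁, hall₁, hgr₁⟩ := exists_isGreedyOrder h
  obtain ⟨l₂, hnd₂, hlen₂, hall₂, hgr₂⟩ := exists_isGreedyOrder g
  refine ⟨l₁, l₂.reverse, hnd₁, hall₁, List.nodup_reverse.2 hnd₂, by simpa using hall₂, ?_⟩
  rintro k - hkn S rfl
  set κ := (Real.exp (c * γ) - 1) / (c * Real.exp (c * γ))
  have hκ0 : 0 ≤ κ := div_nonneg (sub_nonneg.2 (Real.one_le_exp (by positivity))) (by positivity)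
  have hκ1 : κ ≤ 1 := exp_sub_one_div_mul_exp_le_one hc0 hγ1
  have hh := hgr₁.exp_const_mul_le hnd₁ hhm hc0 hc1 hγ0.le hγ1 hhC hhγ (S := S) (hlen₁ ▸ hkn)
  have hg := hgr₂.exp_const_mul_le hnd₂ hgm hc0 hc1 hγ0.le hγ1 hgC hgγ (S := Sᶜ)
    (hlen₂ ▸ card_le_univ Sᶜ)
  rw [card_compl, ← hlen₂] at hg
  rw [toFinset_reverse_take hnd₂ hall₂, fObj, fObj, fObj, compl_compl]
  linarith [mul_nonneg (sub_nonneg.2 hκ1) (hh0 ∅), mul_nonneg (sub_nonneg.2 hκ1) (hg0 ∅),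
    hg0 (l₁.take #S).toFinsetᶜ, hh0 (l₂.take (l₂.length - #S)).toFinsetᶜ]

end IncDec
end

section
/- For every c ∈ [0,1] and every integer n ≥ 2 there exist a finite set E with |E| = n and monotone submodular functions g, h : 2^E → ℝ≥0, each with curvature exactly c, such that for every ordering π = (e_1, …, e_n) of E there exist k ∈ {1, …, n} and S ⊆ E with |S| = k and f(S) ≥ (2(n−1)/((2−c)(n−1)+c))·f(S_k). (As n → ∞, the ratio 2(n−1)/((2−c)(n−1)+c) tends to 1 + c/(2−c).) -/
namespace IncDec

open Finset

variable {α : Type*}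

section SetFunctions

variable [DecidableEq α]

lemma marg_eq_zero_of_mem {F : Finset α → ℝ} {e : α} {S : Finset α} (he : e ∈ S) :
    marg F e S = 0 := by
  rw [marg, insert_eq_of_mem he, sub_self]

lemma fObj_self_compl [Fintype α] (F : Finset α → ℝ) (S : Finset α) :
    fObj F F Sᶜ = fObj F F S := by
  rw [fObj, fObj, compl_compl, add_comm]

lemma CurvatureLE.curvatureEq {F : Finset α → ℝ} {c : ℝ} (hF : CurvatureLE F c)
    (hmem : 1 - c ∈ curvRatioSet F) : CurvatureEq F c := by
  refine Or.inr ⟨hmem, ?_⟩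
  rintro r ⟨A, B, e, heB, hpos, rfl⟩
  exact (le_div_iff₀ hpos).2 (hF A B e heB)

end SetFunctions

section MinIncrement

variable {t t' u K : ℝ}

lemma min_add_sub_min_nonneg (hu : 0 ≤ u) : 0 ≤ min (t + u) K - min t K := by
  simp only [min_def]; split_ifs <;> linarith

lemma min_add_sub_min_le (hu : 0 ≤ u) : min (t + u) K - min t K ≤ u := by
  simp only [min_def]; split_ifs <;> linarith

lemma min_add_sub_min_antitone (htt' : t ≤ t') (hu : 0 ≤ u) :
    min (t' + u) K - min t' K ≤ min (t + u) K - min t K := by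
  simp only [min_def]; split_ifs <;> linarith

end MinIncrement

section CappedAdditive

variable {w : α → ℝ} {K c : ℝ}

def cappedAdditive (w : α → ℝ) (K c : ℝ) (S : Finset α) : ℝ :=
  (1 - c) * ∑ e ∈ S, w e + c * min (∑ e ∈ S, w e) K

lemma cappedAdditive_mono (hw : ∀ e, 0 ≤ w e) (hc0 : 0 ≤ c) (hc1 : c ≤ 1) :
    Mono (cappedAdditive w K c) := by
  intro S T hST
  have hsum := sum_le_sum_of_subset_of_nonneg hST fun e _ _ => hw e
  unfold cappedAdditive
  gcongr

lemma cappedAdditive_nonneg (hw : ∀ e, 0 ≤ w e) (hK : 0 ≤ K) (hc0 : 0 ≤ c) (hc1 : c ≤ 1) :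
    Nonneg (cappedAdditive w K c) := by
  intro S
  have hsum : 0 ≤ ∑ e ∈ S, w e := sum_nonneg fun e _ => hw e
  unfold cappedAdditive
  have : 0 ≤ min (∑ e ∈ S, w e) K := le_min hsum hK
  have : 0 ≤ 1 - c := by linarith
  positivity

variable [DecidableEq α]

lemma marg_cappedAdditive {e : α} {S : Finset α} (he : e ∉ S) :
    marg (cappedAdditive w K c) e S =
      (1 - c) * w e + c * (min (∑ x ∈ S, w x + w e) K - min (∑ x ∈ S, w x) K) := by
  rw [marg, cappedAdditive, cappedAdditive, sum_insert he]
  ring_nf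

lemma cappedAdditive_submodular (hw : ∀ e, 0 ≤ w e) (hc0 : 0 ≤ c) :
    Submodular (cappedAdditive w K c) := by
  intro S T hST e heT
  rw [marg_cappedAdditive heT, marg_cappedAdditive fun h => heT (hST h)]
  gcongr (1 - c) * w e + c * ?_
  exact min_add_sub_min_antitone (sum_le_sum_of_subset_of_nonneg hST fun x _ _ => hw x) (hw e)

lemma cappedAdditive_curvatureLE (hw : ∀ e, 0 ≤ w e) (hc0 : 0 ≤ c) (hc1 : c ≤ 1) :
    CurvatureLE (cappedAdditive w K c) c := by
  intro A B e heB
  by_cases heA : e ∈ A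
  · rw [marg_eq_zero_of_mem heA, marg_eq_zero_of_mem (mem_union_left B heA), mul_zero]
  have heAB : e ∉ A ∪ B := by simp [heA, heB]
  have hA : marg (cappedAdditive w K c) e A ≤ w e := by
    rw [marg_cappedAdditive heA]
    nlinarith [min_add_sub_min_le (t := ∑ x ∈ A, w x) (K := K) (hw e)]
  have hAB : (1 - c) * w e ≤ marg (cappedAdditive w K c) e (A ∪ B) := by
    rw [marg_cappedAdditive heAB]
    nlinarith [min_add_sub_min_nonneg (t := ∑ x ∈ A ∪ B, w x) (K := K) (hw e)]
  calc marg (cappedAdditive w K c) e (A ∪ B) ≥ (1 - c) * w e := hAB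
    _ ≥ (1 - c) * marg (cappedAdditive w K c) e A := by gcongr

lemma one_sub_mem_curvRatioSet_cappedAdditive {a b : α} (hab : a ≠ b) (haK : K ≤ w a)
    (hb : 0 < w b) (hbK : w b ≤ K) : 1 - c ∈ curvRatioSet (cappedAdditive w K c) := by
  have hmarg_empty : marg (cappedAdditive w K c) b ∅ = w b := by
    rw [marg_cappedAdditive (notMem_empty b), sum_empty, zero_add,
      min_eq_left hbK, min_eq_left (hb.le.trans hbK)]
    ring
  have hmarg_a : marg (cappedAdditive w K c) b (∅ ∪ {a}) = (1 - c) * w b := by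
    rw [empty_union, marg_cappedAdditive (by simpa using hab.symm), sum_singleton,
      min_eq_right (by linarith), min_eq_right haK]
    ring
  refine ⟨∅, {a}, b, by simpa using hab.symm, by rw [hmarg_empty]; exact hb, ?_⟩
  rw [hmarg_a, hmarg_empty, mul_div_cancel_right₀ _ hb.ne']

end CappedAdditive

lemma exists_take_one_eq_singleton_or_take_eq_compl [Fintype α] [DecidableEq α]
    (hcard : 2 ≤ Fintype.card α) {π : List α} (hnd : π.Nodup) (hall : ∀ x, x ∈ π)
    (a : α) : ∃ x ≠ a,
      (π.take 1).toFinset = {x} ∨ (π.take (Fintype.card α - 1)).toFinset = {x}ᶜ := by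
  obtain _ | ⟨y, l⟩ := π
  · exact absurd (hall a) List.not_mem_nil
  by_cases hya : y = a
  · subst hya
    set T := ((y :: l).take (Fintype.card α - 1)).toFinset
    have hlen : (y :: l).length = Fintype.card α := by
      rw [← List.toFinset_card_of_nodup hnd, ← card_univ]
      congr 1
      ext x; simpa using hall x
    have hT : T.card = Fintype.card α - 1 := by
      rw [List.toFinset_card_of_nodup (hnd.sublist (List.take_sublist _ _)), List.length_take,
        hlen]
      omega
    obtain ⟨x, hx⟩ : ∃ x, Tᶜ = {x} := card_eq_one.1 (by rw [card_compl, hT]; omega)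
    have hyT : y ∈ T := by
      obtain ⟨m, hm⟩ : ∃ m, Fintype.card α - 1 = m + 1 := ⟨Fintype.card α - 2, by omega⟩
      simp [T, hm]
    refine ⟨x, fun hxy => ?_, Or.inr (by rw [← hx, compl_compl])⟩
    exact mem_compl.1 (hx ▸ mem_singleton_self x) (hxy ▸ hyT)
  · exact ⟨y, hya, Or.inl (by simp)⟩

section HardInstance

variable {n : ℕ}

def hardWeight (n : ℕ) (a e : Fin n) : ℝ := if e = a then (n : ℝ) - 1 else 1

def hardInstance (c : ℝ) (n : ℕ) (a : Fin n) : Finset (Fin n) → ℝ :=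
  cappedAdditive (hardWeight n a) ((n : ℝ) - 1) c

lemma one_le_hardWeight (hn : 2 ≤ n) (a e : Fin n) : 1 ≤ hardWeight n a e := by
  have : (2 : ℝ) ≤ n := by exact_mod_cast hn
  unfold hardWeight; split_ifs <;> linarith

lemma hardWeight_le (hn : 2 ≤ n) (a e : Fin n) : hardWeight n a e ≤ (n : ℝ) - 1 := by
  have : (2 : ℝ) ≤ n := by exact_mod_cast hn
  unfold hardWeight; split_ifs <;> linarith

lemma sum_hardWeight_compl_singleton (a x : Fin n) :
    ∑ e ∈ {x}ᶜ, hardWeight n a e = 2 * ((n : ℝ) - 1) - hardWeight n a x := by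
  have htotal : ∑ e, hardWeight n a e = 2 * ((n : ℝ) - 1) := by
    have hrest : ∀ e ∈ univ.erase a, hardWeight n a e = 1 := fun e he =>
      if_neg (ne_of_mem_erase he)
    have hpos : 1 ≤ n := Fin.pos a
    rw [← add_sum_erase _ _ (mem_univ a), sum_congr rfl hrest, hardWeight, if_pos rfl, sum_const,
      card_erase_of_mem (mem_univ a), card_univ, Fintype.card_fin, nsmul_one, Nat.cast_sub hpos]
    ring
  rw [← htotal, ← sum_compl_add_sum {x}, sum_singleton, add_sub_cancel_right]

lemma hardInstance_singleton (hn : 2 ≤ n) (c : ℝ) (a x : Fin n) :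
    hardInstance c n a {x} = hardWeight n a x := by
  rw [hardInstance, cappedAdditive, sum_singleton, min_eq_left (hardWeight_le hn a x)]
  ring

lemma fObj_hardInstance_singleton_self (hn : 2 ≤ n) (c : ℝ) (a : Fin n) :
    fObj (hardInstance c n a) (hardInstance c n a) {a} = 2 * ((n : ℝ) - 1) := by
  rw [fObj, hardInstance_singleton hn, hardInstance, cappedAdditive,
    sum_hardWeight_compl_singleton, hardWeight, if_pos rfl]
  rw [show 2 * ((n : ℝ) - 1) - ((n : ℝ) - 1) = (n : ℝ) - 1 by ring, min_self]
  ring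

lemma fObj_hardInstance_singleton_of_ne (hn : 2 ≤ n) (c : ℝ) {a x : Fin n} (hxa : x ≠ a) :
    fObj (hardInstance c n a) (hardInstance c n a) {x} = (2 - c) * ((n : ℝ) - 1) + c := by
  have : (2 : ℝ) ≤ n := by exact_mod_cast hn
  rw [fObj, hardInstance_singleton hn, hardInstance, cappedAdditive,
    sum_hardWeight_compl_singleton, hardWeight, if_neg hxa, min_eq_right (by linarith)]
  ring

end HardInstance

theorem stmt5 (c : ℝ) (hc0 : 0 ≤ c) (hc1 : c ≤ 1) (n : ℕ) (hn : 2 ≤ n) :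
    ∃ g h : Finset (Fin n) → ℝ,
      Mono g ∧ Mono h ∧ Nonneg g ∧ Nonneg h ∧ Submodular g ∧ Submodular h ∧
      CurvatureEq g c ∧ CurvatureEq h c ∧
      ∀ π : List (Fin n), π.Nodup → (∀ x : Fin n, x ∈ π) →
        ∃ k : ℕ, 1 ≤ k ∧ k ≤ n ∧ ∃ S : Finset (Fin n), S.card = k ∧
          fObj g h S ≥
            (2 * ((n : ℝ) - 1) / ((2 - c) * ((n : ℝ) - 1) + c)) *
              fObj g h (π.take k).toFinset := by
  have hn' : (2 : ℝ) ≤ n := by exact_mod_cast hn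
  let a : Fin n := ⟨0, by omega⟩
  let b : Fin n := ⟨1, by omega⟩
  have hw : ∀ e, 0 ≤ hardWeight n a e := fun e => zero_le_one.trans (one_le_hardWeight hn a e)
  have hmono : Mono (hardInstance c n a) := cappedAdditive_mono hw hc0 hc1
  have hnonneg : Nonneg (hardInstance c n a) := cappedAdditive_nonneg hw (by linarith) hc0 hc1
  have hsub : Submodular (hardInstance c n a) := cappedAdditive_submodular hw hc0
  have hcurv : CurvatureEq (hardInstance c n a) c :=
    (cappedAdditive_curvatureLE hw hc0 hc1).curvatureEq <|
      one_sub_mem_curvRatioSet_cappedAdditive (a := a) (b := b) (by simp [a, b, Fin.ext_iff])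
        (by simp [hardWeight]) (by simp [hardWeight, b, a, Fin.ext_iff]) (hardWeight_le hn a b)
  refine ⟨_, _, hmono, hmono, hnonneg, hnonneg, hsub, hsub, hcurv, hcurv, fun π hnd hall => ?_⟩
  have hD : 0 < (2 - c) * ((n : ℝ) - 1) + c := by nlinarith
  have hratio : 2 * ((n : ℝ) - 1) / ((2 - c) * ((n : ℝ) - 1) + c) *
      ((2 - c) * ((n : ℝ) - 1) + c) = 2 * ((n : ℝ) - 1) := div_mul_cancel₀ _ hD.ne'
  have hcard : 2 ≤ Fintype.card (Fin n) := by rwa [Fintype.card_fin]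
  obtain ⟨x, hxa, hT | hT⟩ := exists_take_one_eq_singleton_or_take_eq_compl hcard hnd hall a
  · refine ⟨1, le_rfl, by omega, {a}, card_singleton a, ?_⟩
    rw [hT, fObj_hardInstance_singleton_self hn, fObj_hardInstance_singleton_of_ne hn c hxa,
      hratio]
  · have hcard_compl : ({a}ᶜ : Finset (Fin n)).card = n - 1 := by
      rw [card_compl, card_singleton, Fintype.card_fin]
    refine ⟨n - 1, by omega, by omega, {a}ᶜ, hcard_compl, ?_⟩
    rw [show (π.take (n - 1)).toFinset = {x}ᶜ by simpa using hT, fObj_self_compl,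
      fObj_self_compl, fObj_hardInstance_singleton_self hn,
      fObj_hardInstance_singleton_of_ne hn c hxa, hratio]

end IncDec
end

section
/- There exist a finite set E with |E| = 3 and monotone gross substitute functions g, h : 2^E → ℝ≥0 such that for every ordering π = (e_1, e_2, e_3) of E there exist k ∈ {1, 2, 3} and S ⊆ E with |S| = k and f(S) ≥ (5/4)·f(S_k). -/
lemma List.Nodup.card_toFinset_take {α : Type*} [DecidableEq α] {l : List α} (hl : l.Nodup)
    {k : ℕ} (hk : k ≤ l.length) : (l.take k).toFinset.card = k := by
  rw [List.toFinset_card_of_nodup (hl.sublist (List.take_sublist k l)), List.length_take,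
    min_eq_left hk]

lemma List.Nodup.length_eq_card_of_forall_mem {α : Type*} [Fintype α] [DecidableEq α]
    {l : List α} (hl : l.Nodup) (hall : ∀ x, x ∈ l) : l.length = Fintype.card α := by
  rw [← List.toFinset_card_of_nodup hl, ← Finset.card_univ]
  congr
  ext x
  simp [hall x]

namespace IncDec

open Finset

section IntCast

variable {α : Type*} {F : Finset α → ℤ}

lemma mono_intCast (hF : ∀ ⦃S T : Finset α⦄, S ⊆ T → F S ≤ F T) :
    Mono fun S => (F S : ℝ) :=
  fun _ _ hST => Int.cast_le.mpr (hF hST)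

lemma nonneg_intCast (hF : ∀ S, 0 ≤ F S) : Nonneg fun S => (F S : ℝ) :=
  fun S => show (0 : ℝ) ≤ F S by exact_mod_cast hF S

lemma marg_intCast [DecidableEq α] (e : α) (A : Finset α) :
    marg (fun S => (F S : ℝ)) e A = ((F (insert e A) - F A : ℤ) : ℝ) := by
  simp [marg]

lemma margSet_intCast [DecidableEq α] (B A : Finset α) :
    margSet (fun S => (F S : ℝ)) B A = ((F (B ∪ A) - F A : ℤ) : ℝ) := by
  simp [margSet]

lemma grossSubstitute_intCast [DecidableEq α]
    (hsub : ∀ ⦃S T : Finset α⦄, S ⊆ T → ∀ e, e ∉ T →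
      F (insert e T) - F T ≤ F (insert e S) - F S)
    (hexch : ∀ A B : Finset α, Disjoint A B → 2 ≤ B.card → ∀ b ∈ B, ∃ b' ∈ B.erase b,
      (F (insert b A) - F A) + (F (B.erase b ∪ A) - F A) ≤
        (F (insert b' A) - F A) + (F (B.erase b' ∪ A) - F A)) :
    GrossSubstitute fun S => (F S : ℝ) := by
  refine ⟨fun S T hST e he => ?_, fun A B hAB hB b hb => ?_⟩
  · simp only [marg_intCast]
    exact_mod_cast hsub hST e he
  · obtain ⟨b', hb', hle⟩ := hexch A B hAB hB b hb
    refine ⟨b', hb', ?_⟩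
    simp only [marg_intCast, margSet_intCast]
    exact_mod_cast hle

lemma fObj_intCast [Fintype α] [DecidableEq α] (g h : Finset α → ℤ) (S : Finset α) :
    fObj (fun S => (g S : ℝ)) (fun S => (h S : ℝ)) S = ((h S + g Sᶜ : ℤ) : ℝ) := by
  simp [fObj]

end IntCast

def gEx (S : Finset (Fin 3)) : ℤ := (if 0 ∈ S ∨ 2 ∈ S then 2 else 0) + if 1 ∈ S then 1 else 0

def hEx (S : Finset (Fin 3)) : ℤ := (if 0 ∈ S ∨ 1 ∈ S then 2 else 0) + if 2 ∈ S then 1 else 0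

def fEx (S : Finset (Fin 3)) : ℤ := hEx S + gEx Sᶜ

lemma gEx_mono : ∀ ⦃S T : Finset (Fin 3)⦄, S ⊆ T → gEx S ≤ gEx T := by decide

lemma hEx_mono : ∀ ⦃S T : Finset (Fin 3)⦄, S ⊆ T → hEx S ≤ hEx T := by decide

lemma gEx_nonneg : ∀ S, 0 ≤ gEx S := by decide

lemma hEx_nonneg : ∀ S, 0 ≤ hEx S := by decide

lemma gEx_submodular : ∀ ⦃S T : Finset (Fin 3)⦄, S ⊆ T → ∀ e, e ∉ T →
    gEx (insert e T) - gEx T ≤ gEx (insert e S) - gEx S := by decide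

lemma hEx_submodular : ∀ ⦃S T : Finset (Fin 3)⦄, S ⊆ T → ∀ e, e ∉ T →
    hEx (insert e T) - hEx T ≤ hEx (insert e S) - hEx S := by decide

lemma gEx_exchange : ∀ A B : Finset (Fin 3), Disjoint A B → 2 ≤ B.card → ∀ b ∈ B,
    ∃ b' ∈ B.erase b,
      (gEx (insert b A) - gEx A) + (gEx (B.erase b ∪ A) - gEx A) ≤
        (gEx (insert b' A) - gEx A) + (gEx (B.erase b' ∪ A) - gEx A) := by decide

lemma hEx_exchange : ∀ A B : Finset (Fin 3), Disjoint A B → 2 ≤ B.card → ∀ b ∈ B,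
    ∃ b' ∈ B.erase b,
      (hEx (insert b A) - hEx A) + (hEx (B.erase b ∪ A) - hEx A) ≤
        (hEx (insert b' A) - hEx A) + (hEx (B.erase b' ∪ A) - hEx A) := by decide

lemma fEx_singleton_zero : fEx {0} = 5 := by decide

lemma fEx_pair_one_two : fEx {1, 2} = 5 := by decide

lemma fEx_eq_four : ∀ S : Finset (Fin 3),
    (S.card = 1 ∧ S ≠ {0}) ∨ (S.card = 2 ∧ S ≠ {1, 2}) → fEx S = 4 := by decide

lemma exists_prefix_fEx_eq_four (π : List (Fin 3)) (hπ : π.Nodup) (hall : ∀ x, x ∈ π) :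
    ∃ k, (k = 1 ∨ k = 2) ∧ fEx (π.take k).toFinset = 4 := by
  have hlen : π.length = 3 := by simpa using hπ.length_eq_card_of_forall_mem hall
  have hS₁ : (π.take 1).toFinset.card = 1 := hπ.card_toFinset_take (by omega)
  have hS₂ : (π.take 2).toFinset.card = 2 := hπ.card_toFinset_take (by omega)
  have hS₁₂ : (π.take 1).toFinset ⊆ (π.take 2).toFinset := fun x hx =>
    List.mem_toFinset.mpr (List.take_subset_take_left π (by norm_num) (List.mem_toFinset.mp hx))
  by_cases h₁ : (π.take 1).toFinset = {0}
  · have h₂ : (π.take 2).toFinset ≠ {1, 2} := fun h₂ => by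
      have h₀ := hS₁₂ (h₁ ▸ Finset.mem_singleton_self 0)
      simp [h₂] at h₀
    exact ⟨2, Or.inr rfl, fEx_eq_four _ (Or.inr ⟨hS₂, h₂⟩)⟩
  · exact ⟨1, Or.inl rfl, fEx_eq_four _ (Or.inl ⟨hS₁, h₁⟩)⟩

theorem stmt7 :
    ∃ g h : Finset (Fin 3) → ℝ,
      Mono g ∧ Mono h ∧ Nonneg g ∧ Nonneg h ∧
      GrossSubstitute g ∧ GrossSubstitute h ∧
      ∀ π : List (Fin 3), π.Nodup → (∀ x : Fin 3, x ∈ π) →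
        ∃ k : ℕ, 1 ≤ k ∧ k ≤ 3 ∧ ∃ S : Finset (Fin 3), S.card = k ∧
          fObj g h S ≥ (5 / 4 : ℝ) * fObj g h (π.take k).toFinset := by
  refine ⟨fun S => (gEx S : ℝ), fun S => (hEx S : ℝ), mono_intCast gEx_mono,
    mono_intCast hEx_mono, nonneg_intCast gEx_nonneg, nonneg_intCast hEx_nonneg,
    grossSubstitute_intCast gEx_submodular gEx_exchange,
    grossSubstitute_intCast hEx_submodular hEx_exchange, fun π hπ hall => ?_⟩
  obtain ⟨k, hk, hfour⟩ := exists_prefix_fEx_eq_four π hπ hall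
  have hbest : ∃ S : Finset (Fin 3), S.card = k ∧ fEx S = 5 := by
    rcases hk with rfl | rfl
    exacts [⟨{0}, rfl, fEx_singleton_zero⟩, ⟨{1, 2}, rfl, fEx_pair_one_two⟩]
  obtain ⟨S, hS, hfive⟩ := hbest
  refine ⟨k, by omega, by omega, S, hS, ?_⟩
  have hS' : fObj _ _ S = ((fEx S : ℤ) : ℝ) := fObj_intCast gEx hEx S
  have hπ' : fObj _ _ (π.take k).toFinset = ((fEx (π.take k).toFinset : ℤ) : ℝ) :=
    fObj_intCast gEx hEx _
  rw [hS', hπ', hfive, hfour]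
  norm_num

end IncDec
end
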